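/- Let R be a ring with identity such that A·A ≠ 0 for every nonzero A ∈ IPO(R) and A^l(IPO(R)) ∩ A^r(IPO(R)) ≠ ∅. Then APOG(R) is not a tournament; that is, there exist distinct vertices A and B of APOG(R) such that either both AB = 0 and BA = 0, or both AB ≠ 0 and BA ≠ 0. -/

import Mathlib

/-!
Take `X` in `A^l ∩ A^r`, with `L * X = 0 = X * P` for vertices `L`, `P`. Since `IPO(R)` is closed
under products, `P * L` is again in it. If `P * L ≠ 0`, then `X` annihilates `P * L` on both
sides, and `X ≠ P * L` because `X * X ≠ 0`. If `P * L = 0`, then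
`(L * P) * (L * P) = L * (P * L) * P = 0` forces `L * P = 0`, so `L` and `P` annihilate each
other, and `L ≠ P` because `L * L ≠ 0`.
-/

open scoped Pointwise

/-- `I` is a left ideal of the ring `R`: an additive subgroup with `R·I ⊆ I`. -/
def IsLeftIdeal (R : Type*) [Ring R] (I : AddSubgroup R) : Prop :=
  ∀ r : R, ∀ x ∈ I, r * x ∈ I

/-- `I` is a right ideal of the ring `R`: an additive subgroup with `I·R ⊆ I`. -/
def IsRightIdeal (R : Type*) [Ring R] (I : AddSubgroup R) : Prop :=
  ∀ r : R, ∀ x ∈ I, x * r ∈ I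

/-- `I` is a one-sided (left or right) ideal of `R`. -/
def IsOneSidedIdeal (R : Type*) [Ring R] (I : AddSubgroup R) : Prop :=
  IsLeftIdeal R I ∨ IsRightIdeal R I

/-- `IPO(R)`: the set of all products `I*J` of two one-sided ideals of `R`.
Here `I * J` is the additive subgroup generated by `{a*b : a ∈ I, b ∈ J}`
(the pointwise product of additive subgroups). -/
def IPO (R : Type*) [Ring R] : Set (AddSubgroup R) :=
  {A | ∃ I J : AddSubgroup R, IsOneSidedIdeal R I ∧ IsOneSidedIdeal R J ∧ A = I * J}

/-- `A` is a vertex of `APOG(R) = Γ(IPO(R))`: a nonzero element of `IPO(R)` that is a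
one-sided zero-divisor of the semigroup `IPO(R)`. -/
def APOGVertex (R : Type*) [Ring R] (A : AddSubgroup R) : Prop :=
  A ∈ IPO R ∧ A ≠ ⊥ ∧ ∃ B ∈ IPO R, B ≠ ⊥ ∧ (A * B = ⊥ ∨ B * A = ⊥)

/-- The directed edge `A → B` of `APOG(R)`: both are vertices, `A ≠ B` and `A*B = 0`. -/
def APOGEdge (R : Type*) [Ring R] (A B : AddSubgroup R) : Prop :=
  APOGVertex R A ∧ APOGVertex R B ∧ A ≠ B ∧ A * B = ⊥

/-- `A^l(IPO(R))`. -/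
def AleftIPO (R : Type*) [Ring R] : Set (AddSubgroup R) :=
  {A | APOGVertex R A ∧ ∃ B, APOGVertex R B ∧ B * A = ⊥}

/-- `A^r(IPO(R))`. -/
def ArightIPO (R : Type*) [Ring R] : Set (AddSubgroup R) :=
  {A | APOGVertex R A ∧ ∃ B, APOGVertex R B ∧ A * B = ⊥}


namespace AddSubgroup

variable {R : Type*}

section NonUnitalNonAssocRing

variable [NonUnitalNonAssocRing R]

theorem mul_mem_mul {A B : AddSubgroup R} {a b : R} (ha : a ∈ A) (hb : b ∈ B) :
    a * b ∈ A * B :=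
  AddSubmonoid.mul_mem_mul ha hb

protected theorem mul_induction_on {A B : AddSubgroup R} {C : R → Prop} {x : R} (hx : x ∈ A * B)
    (mul : ∀ a ∈ A, ∀ b ∈ B, C (a * b)) (add : ∀ x y, C x → C y → C (x + y)) : C x :=
  AddSubmonoid.mul_induction_on (M := A.toAddSubmonoid) (N := B.toAddSubmonoid) hx mul add

@[simp]
protected theorem bot_mul (A : AddSubgroup R) : ⊥ * A = ⊥ :=
  toAddSubmonoid_injective <| by
    rw [mul_toAddSubmonoid, bot_toAddSubmonoid, AddSubmonoid.bot_mul]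

@[simp]
protected theorem mul_bot (A : AddSubgroup R) : A * ⊥ = ⊥ :=
  toAddSubmonoid_injective <| by
    rw [mul_toAddSubmonoid, bot_toAddSubmonoid, AddSubmonoid.mul_bot]

end NonUnitalNonAssocRing

section NonUnitalRing

variable [NonUnitalRing R]

protected theorem mul_assoc (A B C : AddSubgroup R) : A * B * C = A * (B * C) :=
  toAddSubmonoid_injective <| by
    simp only [mul_toAddSubmonoid]
    exact mul_assoc _ _ _

theorem mul_mul_eq_bot_of_mul_eq_bot {A B C D : AddSubgroup R} (h : B * C = ⊥) :
    A * B * (C * D) = ⊥ := by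
  rw [← AddSubgroup.mul_assoc, AddSubgroup.mul_assoc A, h, AddSubgroup.mul_bot,
    AddSubgroup.bot_mul]

end NonUnitalRing

end AddSubgroup

section OneSidedIdeal

variable {R : Type*} [Ring R]

theorem IsLeftIdeal.mul_right {I : AddSubgroup R} (hI : IsLeftIdeal R I) (X : AddSubgroup R) :
    IsLeftIdeal R (I * X) := fun r _ hx =>
  AddSubgroup.mul_induction_on (C := fun y => r * y ∈ I * X) hx
    (fun i hi x hx => mul_assoc r i x ▸ AddSubgroup.mul_mem_mul (hI r i hi) hx)
    (fun _ _ hy hz => (mul_add r _ _).symm ▸ add_mem hy hz)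

theorem IsRightIdeal.mul_left {J : AddSubgroup R} (hJ : IsRightIdeal R J) (X : AddSubgroup R) :
    IsRightIdeal R (X * J) := fun r _ hx =>
  AddSubgroup.mul_induction_on (C := fun y => y * r ∈ X * J) hx
    (fun x hx j hj => (mul_assoc x j r).symm ▸ AddSubgroup.mul_mem_mul hx (hJ r j hj))
    (fun _ _ hy hz => (add_mul _ _ r).symm ▸ add_mem hy hz)

theorem mul_mem_IPO {A B : AddSubgroup R} (hA : A ∈ IPO R) (hB : B ∈ IPO R) :
    A * B ∈ IPO R := by
  obtain ⟨I, J, hI, hJ, rfl⟩ := hA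
  obtain ⟨K, L, hK, hL, rfl⟩ := hB
  rcases hJ with hJ | hJ
  · exact ⟨I, J * (K * L), hI, .inl (hJ.mul_right _), AddSubgroup.mul_assoc I J (K * L)⟩
  rcases hK with hK | hK
  · exact ⟨I * J, K * L, .inr (hJ.mul_left I), .inl (hK.mul_right L), rfl⟩
  · exact ⟨I * J * K, L, .inr (hK.mul_left (I * J)), hL,
      (AddSubgroup.mul_assoc (I * J) K L).symm⟩

end OneSidedIdeal

/-- If `A*A ≠ 0` for every nonzero `A ∈ IPO(R)` and
`A^l(IPO(R)) ∩ A^r(IPO(R)) ≠ ∅`, then `APOG(R)` is not a tournament: there are distinct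
vertices `A, B` with either both `A*B = 0` and `B*A = 0`, or both `A*B ≠ 0` and
`B*A ≠ 0`. -/
theorem APOG_not_tournament (R : Type*) [Ring R]
    (h1 : ∀ A ∈ IPO R, A ≠ ⊥ → A * A ≠ ⊥)
    (h2 : (AleftIPO R ∩ ArightIPO R).Nonempty) :
    ∃ A B : AddSubgroup R, APOGVertex R A ∧ APOGVertex R B ∧ A ≠ B ∧
      ((A * B = ⊥ ∧ B * A = ⊥) ∨ (A * B ≠ ⊥ ∧ B * A ≠ ⊥)) := by
  have ne_of_mul_eq_bot {A B : AddSubgroup R} (hA : APOGVertex R A) (hAB : A * B = ⊥) :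
      A ≠ B := by
    rintro rfl
    exact h1 A hA.1 hA.2.1 hAB
  obtain ⟨X, ⟨hX, L, hL, hLX⟩, -, P, hP, hXP⟩ := h2
  by_cases hPL : P * L = ⊥
  · have hLP : L * P = ⊥ := by
      by_contra hLP
      exact h1 _ (mul_mem_IPO hL.1 hP.1) hLP (AddSubgroup.mul_mul_eq_bot_of_mul_eq_bot hPL)
    exact ⟨L, P, hL, hP, ne_of_mul_eq_bot hL hLP, .inl ⟨hLP, hPL⟩⟩
  · have hXPL : X * (P * L) = ⊥ := by rw [← AddSubgroup.mul_assoc, hXP, AddSubgroup.bot_mul]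
    have hPLX : P * L * X = ⊥ := by rw [AddSubgroup.mul_assoc, hLX, AddSubgroup.mul_bot]
    have hPLv : APOGVertex R (P * L) :=
      ⟨mul_mem_IPO hP.1 hL.1, hPL, X, hX.1, hX.2.1, .inr hXPL⟩
    exact ⟨X, P * L, hX, hPLv, ne_of_mul_eq_bot hX hXPL, .inl ⟨hXPL, hPLX⟩⟩
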